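/- Let S be an ordered semigroup with real multiplication satisfying axioms O1–O6, and let λ₁, λ₂ be functionals on S. Define λ : S → [0,∞] by λ(f) = sup{ λ₁(f₁) + λ₂(f₂) : f₁, f₂ ∈ S, f₁ + f₂ ≤ f }. Then λ is additive (λ(f + g) = λ(f) + λ(g) for all f, g ∈ S), and the map f ↦ sup_{f' ≪ f} λ(f') is a functional on S that is the least upper bound of λ₁ and λ₂ in F(S). -/

import Mathlib

open scoped ENNReal

/-- `CC s t` : `s` is (sequentially) compactly contained in `t`, written `s ≪ t`. -/
def CC {S : Type*} [AddCommMonoid S] [PartialOrder S] (s t : S) : Prop :=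
  ∀ u : ℕ → S, Monotone u → ∀ x : S, IsLUB (Set.range u) x → t ≤ x → ∃ n, s ≤ u n

/-- An ordered semigroup (positive, with translation invariant order) satisfying axioms O1-O5. -/
structure CuO5 (S : Type*) [AddCommMonoid S] [PartialOrder S] : Prop where
  addRightMono : ∀ {s t : S}, s ≤ t → ∀ r : S, s + r ≤ t + r
  zeroLe : ∀ s : S, 0 ≤ s
  O1 : ∀ u : ℕ → S, Monotone u → ∃ x : S, IsLUB (Set.range u) x
  O2 : ∀ s : S, ∃ u : ℕ → S, (∀ n, CC (u n) (u (n + 1))) ∧ IsLUB (Set.range u) s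
  O3 : ∀ {s₁ t₁ s₂ t₂ : S}, CC s₁ t₁ → CC s₂ t₂ → CC (s₁ + s₂) (t₁ + t₂)
  O4 : ∀ u v : ℕ → S, Monotone u → Monotone v → ∀ x y : S,
    IsLUB (Set.range u) x → IsLUB (Set.range v) y →
    IsLUB (Set.range fun n => u n + v n) (x + y)
  O5 : ∀ {s' s t : S}, CC s' s → s ≤ t → ∃ r : S, s' + r ≤ t ∧ t ≤ s + r

/-- Axioms O1-O6. -/
structure CuO6 (S : Type*) [AddCommMonoid S] [PartialOrder S] extends CuO5 S : Prop where
  O6 : ∀ {s r t : S}, s ≤ r + t → ∀ {s' : S}, CC s' s →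
    ∃ r' t' : S, s' ≤ r' + t' ∧ r' ≤ r ∧ r' ≤ s ∧ t' ≤ t ∧ t' ≤ s

/-- A functional on `S`: additive, order preserving, zero preserving map to `[0,∞]`
preserving suprema of increasing sequences. -/
structure IsFunctional {S : Type*} [AddCommMonoid S] [PartialOrder S] (l : S → ℝ≥0∞) : Prop where
  map_zero : l 0 = 0
  map_add : ∀ s t : S, l (s + t) = l s + l t
  mono : ∀ {s t : S}, s ≤ t → l s ≤ l t
  map_sup : ∀ u : ℕ → S, Monotone u → ∀ x : S, IsLUB (Set.range u) x → l x = ⨆ n, l (u n)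

/-- Real multiplication on `S` : a map `(0,∞] × S → S` additive, order preserving and
sup-(of increasing sequences)-preserving in each variable, with `1 · s = s`.
Scalars are elements of `ℝ≥0∞` required to be positive. -/
structure RealMul (S : Type*) [AddCommMonoid S] [PartialOrder S] where
  smul : ℝ≥0∞ → S → S
  add_left : ∀ {a b : ℝ≥0∞}, 0 < a → 0 < b → ∀ s : S, smul (a + b) s = smul a s + smul b s
  add_right : ∀ {a : ℝ≥0∞}, 0 < a → ∀ s t : S, smul a (s + t) = smul a s + smul a t
  mono_left : ∀ {a b : ℝ≥0∞}, 0 < a → a ≤ b → ∀ s : S, smul a s ≤ smul b s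
  mono_right : ∀ {a : ℝ≥0∞}, 0 < a → ∀ {s t : S}, s ≤ t → smul a s ≤ smul a t
  sup_left : ∀ u : ℕ → ℝ≥0∞, Monotone u → 0 < u 0 → ∀ s : S,
    IsLUB (Set.range fun n => smul (u n) s) (smul (⨆ n, u n) s)
  sup_right : ∀ {a : ℝ≥0∞}, 0 < a → ∀ u : ℕ → S, Monotone u → ∀ x : S,
    IsLUB (Set.range u) x → IsLUB (Set.range fun n => smul a (u n)) (smul a x)
  one_smul : ∀ s : S, smul 1 s = s

/-- `D` is a dense subset of `S`: every element of `S` is the supremum of a rapidly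
increasing sequence of elements of `D`. -/
def IsDenseSub {S : Type*} [AddCommMonoid S] [PartialOrder S] (D : Set S) : Prop :=
  ∀ s : S, ∃ u : ℕ → S, (∀ n, u n ∈ D) ∧ (∀ n, CC (u n) (u (n + 1))) ∧ IsLUB (Set.range u) s

/-- `m` is the least upper bound of the functionals `l₁` and `l₂` in `F(S)`
(pointwise order). -/
def IsFSup {S : Type*} [AddCommMonoid S] [PartialOrder S] (l₁ l₂ m : S → ℝ≥0∞) : Prop :=
  IsFunctional m ∧ (∀ s, l₁ s ≤ m s) ∧ (∀ s, l₂ s ≤ m s) ∧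
    ∀ d : S → ℝ≥0∞, IsFunctional d → (∀ s, l₁ s ≤ d s) → (∀ s, l₂ s ≤ d s) → ∀ s, m s ≤ d s

/-- `m` is the greatest lower bound of the functionals `l₁` and `l₂` in `F(S)`
(pointwise order). -/
def IsFInf {S : Type*} [AddCommMonoid S] [PartialOrder S] (l₁ l₂ m : S → ℝ≥0∞) : Prop :=
  IsFunctional m ∧ (∀ s, m s ≤ l₁ s) ∧ (∀ s, m s ≤ l₂ s) ∧
    ∀ d : S → ℝ≥0∞, IsFunctional d → (∀ s, d s ≤ l₁ s) → (∀ s, d s ≤ l₂ s) → ∀ s, d s ≤ m s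

/-- An isomorphism of ordered semigroups between `S` and the extended natural numbers. -/
def IsOrdSemigroupIso {S : Type*} [AddCommMonoid S] [PartialOrder S] (e : S ≃ ℕ∞) : Prop :=
  (∀ a b : S, e (a + b) = e a + e b) ∧ e 0 = 0 ∧ ∀ a b : S, a ≤ b ↔ e a ≤ e b

/-!
Superadditivity of `λ = supConv l₁ l₂` is immediate, and every functional above `l₁` and `l₂`
dominates `λ`; once `λ` is additive, its regularization `f ↦ sup_{f' ≪ f} λ f'` is a functional,
and it is therefore the least upper bound of `l₁` and `l₂`.

Subadditivity is the heart of the matter: from `e₁ + e₂ ≤ f + g` we must bound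
`l₁ e₁ + l₂ e₂` by `λ f + λ g`, although there is no cancellation to split `e₁` exactly between
`f` and `g`. We exhaust `e₁` instead. At each round take half of what is left of `e₁`, split
it with O6 into pieces lying under `f`, under `g` and under an error term, cut these pieces off
`f`, `g` and the remainder with O5, and cancel them from the inequality; real multiplication
turns `a + c ≤ b + c` into `a ≤ b + c / n`, so cancelling costs an arbitrarily small error. The
`l₁`-mass of what is left of `e₁` at least halves in each round, up to that error, while the
pieces removed are charged to `λ f + λ g`.
-/

open Filter Topology

section Order

variable {S : Type*} [AddCommMonoid S] [PartialOrder S]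

theorem CuO5.addLeftMono (hS : CuO5 S) : AddLeftMono S :=
  ⟨fun r _ _ h => by simpa only [add_comm r] using hS.addRightMono h r⟩

theorem CC.le {s t : S} (h : CC s t) : s ≤ t := by
  obtain ⟨n, hn⟩ := h (fun _ => t) monotone_const t (by rw [Set.range_const]; exact isLUB_singleton)
    le_rfl
  exact hn

theorem CC.trans_le {s t t' : S} (h : CC s t) (ht : t ≤ t') : CC s t' :=
  fun u hu x hx hx' => h u hu x hx (ht.trans hx')

theorem cc_of_le_of_cc {s' s t : S} (hs : s' ≤ s) (h : CC s t) : CC s' t :=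
  fun u hu x hx ht => (h u hu x hx ht).imp fun _ => hs.trans

theorem CuO5.zero_cc (hS : CuO5 S) (t : S) : CC 0 t :=
  fun _ _ _ _ _ => ⟨0, hS.zeroLe _⟩

theorem CC.eventually_le {s t x : S} {u : ℕ → S} (h : CC s t) (hu : Monotone u)
    (hx : IsLUB (Set.range u) x) (ht : t ≤ x) : ∀ᶠ n in atTop, s ≤ u n := by
  obtain ⟨N, hN⟩ := h u hu x hx ht
  exact eventually_atTop.2 ⟨N, fun n hn => hN.trans (hu hn)⟩

def IsRapidSeq (u : ℕ → S) (x : S) : Prop :=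
  (∀ n, CC (u n) (u (n + 1))) ∧ IsLUB (Set.range u) x

theorem CuO5.exists_isRapidSeq (hS : CuO5 S) (x : S) : ∃ u, IsRapidSeq u x := hS.O2 x

namespace IsRapidSeq

variable {u : ℕ → S} {x : S}

theorem monotone (h : IsRapidSeq u x) : Monotone u :=
  monotone_nat_of_le_succ fun n => (h.1 n).le

theorem le (h : IsRapidSeq u x) (n : ℕ) : u n ≤ x := h.2.1 ⟨n, rfl⟩

theorem cc (h : IsRapidSeq u x) (n : ℕ) : CC (u n) x := (h.1 n).trans_le (h.le (n + 1))

end IsRapidSeq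

theorem CuO5.exists_cc_of_cc_of_isLUB (hS : CuO5 S) {s x : S} {u : ℕ → S} (h : CC s x)
    (hu : Monotone u) (hx : IsLUB (Set.range u) x) : ∃ n, CC s (u n) := by
  obtain ⟨c, hc⟩ := hS.exists_isRapidSeq x
  obtain ⟨i, hi⟩ := h c hc.monotone x hc.2 le_rfl
  obtain ⟨n, hn⟩ := hc.cc (i + 1) u hu x hx le_rfl
  exact ⟨n, cc_of_le_of_cc hi ((hc.1 i).trans_le hn)⟩

theorem CuO6.exists_rapid_split (hS : CuO6 S) {a b c r s : S} (hab : CC a b) (hbc : CC b c)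
    (hc : c ≤ r + s) :
    ∃ (u w : ℕ → S) (r' s' : S), IsRapidSeq u r' ∧ IsRapidSeq w s' ∧
      r' ≤ r ∧ r' ≤ c ∧ s' ≤ s ∧ s' ≤ c ∧ ∀ᶠ n in atTop, a ≤ u n + w n := by
  have := hS.addLeftMono
  obtain ⟨r', s', hb, hr, hrc, hs, hsc⟩ := hS.O6 hc hbc
  obtain ⟨u, hu⟩ := hS.exists_isRapidSeq r'
  obtain ⟨w, hw⟩ := hS.exists_isRapidSeq s'
  refine ⟨u, w, r', s', hu, hw, hr, hrc, hs, hsc, hab.eventually_le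
    (hu.monotone.add hw.monotone) (hS.O4 u w hu.monotone hw.monotone r' s' hu.2 hw.2) hb⟩

end Order

section Functional

variable {S : Type*} [AddCommMonoid S] [PartialOrder S] {l : S → ℝ≥0∞}

theorem IsFunctional.map_nsmul (hl : IsFunctional l) (n : ℕ) (s : S) : l (n • s) = n * l s := by
  induction n with
  | zero => simp [hl.map_zero]
  | succ n ih => rw [succ_nsmul, hl.map_add, ih]; push_cast; ring

theorem IsFunctional.eventually_le_add (hl : IsFunctional l) {u : ℕ → S} {x : S}
    (hu : Monotone u) (hx : IsLUB (Set.range u) x) (hfin : l x ≠ ∞) {δ : ℝ≥0∞} (hδ : δ ≠ 0) :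
    ∀ᶠ n in atTop, l x ≤ l (u n) + δ := by
  rcases eq_or_ne (l x) 0 with h0 | h0
  · simp [h0]
  have hlim : Tendsto (fun n => l (u n)) atTop (𝓝 (l x)) := by
    rw [hl.map_sup u hu x hx]
    exact tendsto_atTop_iSup fun m n hmn => hl.mono (hu hmn)
  filter_upwards [(tendsto_order.1 hlim).1 _ (ENNReal.sub_lt_self hfin h0 hδ)] with n hn
  exact tsub_le_iff_right.1 hn.le

end Functional

theorem ENNReal.le_of_forall_le_add_of_tendsto_zero {a b : ℝ≥0∞} {ε : ℕ → ℝ≥0∞}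
    (hε : Tendsto ε atTop (𝓝 0)) (h : ∀ n, a ≤ b + ε n) : a ≤ b := by
  have hlim : Tendsto (fun n => b + ε n) atTop (𝓝 (b + 0)) := tendsto_const_nhds.add hε
  rw [add_zero] at hlim
  exact ge_of_tendsto' hlim h

theorem ENNReal.inv_natCast_pos (n : ℕ) : (0 : ℝ≥0∞) < (n : ℝ≥0∞)⁻¹ :=
  ENNReal.inv_pos.2 (ENNReal.natCast_ne_top n)

section RealMul

variable {S : Type*} [AddCommMonoid S] [PartialOrder S] (rm : RealMul S)

namespace RealMul

theorem nsmul_smul {t : ℝ≥0∞} (ht : 0 < t) (s : S) {n : ℕ} (hn : n ≠ 0) :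
    n • rm.smul t s = rm.smul (n * t) s := by
  induction n with
  | zero => exact absurd rfl hn
  | succ n ih =>
    rcases eq_or_ne n 0 with rfl | hn'
    · simp
    · rw [succ_nsmul, ih hn', ← rm.add_left (ENNReal.mul_pos (by exact_mod_cast hn') ht.ne') ht]
      push_cast
      ring_nf

theorem smul_nsmul {t : ℝ≥0∞} (ht : 0 < t) (s : S) {n : ℕ} (hn : n ≠ 0) :
    rm.smul t (n • s) = n • rm.smul t s := by
  induction n with
  | zero => exact absurd rfl hn
  | succ n ih =>
    rcases eq_or_ne n 0 with rfl | hn'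
    · simp
    · rw [succ_nsmul, rm.add_right ht, ih hn', succ_nsmul]

theorem nsmul_smul_inv {n : ℕ} (hn : n ≠ 0) (s : S) : n • rm.smul (n : ℝ≥0∞)⁻¹ s = s := by
  rw [rm.nsmul_smul (ENNReal.inv_natCast_pos n) s hn,
    ENNReal.mul_inv_cancel (by exact_mod_cast hn) (ENNReal.natCast_ne_top n), rm.one_smul]

theorem smul_inv_nsmul {n : ℕ} (hn : n ≠ 0) (s : S) : rm.smul (n : ℝ≥0∞)⁻¹ (n • s) = s := by
  rw [rm.smul_nsmul (ENNReal.inv_natCast_pos n) s hn, rm.nsmul_smul_inv hn]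

theorem half_add_half (s : S) : rm.smul 2⁻¹ s + rm.smul 2⁻¹ s = s := by
  simpa [two_nsmul] using rm.nsmul_smul_inv two_ne_zero s

theorem le_add_smul_inv_of_add_le_add (hS : CuO5 S) {a b c : S} (h : a + c ≤ b + c) {n : ℕ}
    (hn : n ≠ 0) : a ≤ b + rm.smul (n : ℝ≥0∞)⁻¹ c := by
  have := hS.addLeftMono
  have hnsmul : ∀ k : ℕ, k • a + c ≤ k • b + c := by
    intro k
    induction k with
    | zero => simp
    | succ k ih =>
      calc (k + 1) • a + c = k • a + (a + c) := by rw [succ_nsmul]; abel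
        _ ≤ k • a + (b + c) := by gcongr
        _ = b + (k • a + c) := by abel
        _ ≤ b + (k • b + c) := by gcongr
        _ = (k + 1) • b + c := by rw [succ_nsmul]; abel
  calc a = rm.smul (n : ℝ≥0∞)⁻¹ (n • a) := (rm.smul_inv_nsmul hn a).symm
    _ ≤ rm.smul (n : ℝ≥0∞)⁻¹ (n • b + c) :=
      rm.mono_right (ENNReal.inv_natCast_pos n)
        ((le_add_of_nonneg_right (hS.zeroLe c)).trans (hnsmul n))
    _ = b + rm.smul (n : ℝ≥0∞)⁻¹ c := by
      rw [rm.add_right (ENNReal.inv_natCast_pos n), rm.smul_inv_nsmul hn]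

end RealMul

theorem IsFunctional.map_smul_inv {l : S → ℝ≥0∞} (hl : IsFunctional l) {n : ℕ} (hn : n ≠ 0)
    (s : S) : l (rm.smul (n : ℝ≥0∞)⁻¹ s) = (n : ℝ≥0∞)⁻¹ * l s := by
  have h := hl.map_nsmul n (rm.smul (n : ℝ≥0∞)⁻¹ s)
  rw [rm.nsmul_smul_inv hn] at h
  rw [h, ← mul_assoc, ENNReal.inv_mul_cancel (by exact_mod_cast hn) (ENNReal.natCast_ne_top n),
    one_mul]

theorem IsFunctional.map_smul_two_inv {l : S → ℝ≥0∞} (hl : IsFunctional l) (s : S) :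
    l (rm.smul 2⁻¹ s) = 2⁻¹ * l s := by
  simpa using hl.map_smul_inv rm two_ne_zero s

end RealMul

theorem CuO5.exists_le_add_of_add_le_add {S : Type*} [AddCommMonoid S] [PartialOrder S]
    (hS : CuO5 S) (rm : RealMul S) {l₁ l₂ : S → ℝ≥0∞}
    (h₁ : IsFunctional l₁) (h₂ : IsFunctional l₂) {a b c : S} (h : a + c ≤ b + c)
    (hc₁ : l₁ c ≠ ∞) (hc₂ : l₂ c ≠ ∞) {δ : ℝ≥0∞} (hδ : δ ≠ 0) :
    ∃ c', a ≤ b + c' ∧ l₁ c' ≤ δ ∧ l₂ c' ≤ δ := by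
  have hsmall : ∀ {l : S → ℝ≥0∞}, IsFunctional l → l c ≠ ∞ →
      ∀ᶠ n : ℕ in atTop, l (rm.smul (n : ℝ≥0∞)⁻¹ c) ≤ δ := by
    intro l hl hc
    have hlim : Tendsto (fun n : ℕ => (n : ℝ≥0∞)⁻¹ * l c) atTop (𝓝 0) := by
      simpa using ENNReal.Tendsto.mul_const ENNReal.tendsto_inv_nat_nhds_zero (Or.inr hc)
    filter_upwards [eventually_ne_atTop 0, (tendsto_order.1 hlim).2 δ (pos_iff_ne_zero.2 hδ)]
      with n hn hlt
    exact (hl.map_smul_inv rm hn c).trans_le hlt.le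
  obtain ⟨n, hn, hn₁, hn₂⟩ :=
    ((eventually_ne_atTop 0).and ((hsmall h₁ hc₁).and (hsmall h₂ hc₂))).exists
  exact ⟨_, rm.le_add_smul_inv_of_add_le_add hS h hn, hn₁, hn₂⟩

section SupConv

variable {S : Type*} [AddCommMonoid S] [PartialOrder S] {l₁ l₂ : S → ℝ≥0∞}

noncomputable def supConv (l₁ l₂ : S → ℝ≥0∞) (f : S) : ℝ≥0∞ :=
  sSup {x | ∃ f₁ f₂ : S, f₁ + f₂ ≤ f ∧ x = l₁ f₁ + l₂ f₂}

theorem le_supConv {f₁ f₂ f : S} (h : f₁ + f₂ ≤ f) : l₁ f₁ + l₂ f₂ ≤ supConv l₁ l₂ f :=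
  le_sSup ⟨f₁, f₂, h, rfl⟩

theorem supConv_le {f : S} {c : ℝ≥0∞} (h : ∀ f₁ f₂ : S, f₁ + f₂ ≤ f → l₁ f₁ + l₂ f₂ ≤ c) :
    supConv l₁ l₂ f ≤ c :=
  sSup_le fun _ ⟨f₁, f₂, hf, hx⟩ => hx ▸ h f₁ f₂ hf

theorem supConv_mono : Monotone (supConv (S := S) l₁ l₂) :=
  fun _ _ h => supConv_le fun _ _ hf => le_supConv (hf.trans h)

theorem left_le_supConv (h₂ : IsFunctional l₂) (f : S) : l₁ f ≤ supConv l₁ l₂ f := by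
  simpa [h₂.map_zero] using le_supConv (l₁ := l₁) (l₂ := l₂) (add_zero f).le

theorem right_le_supConv (h₁ : IsFunctional l₁) (f : S) : l₂ f ≤ supConv l₁ l₂ f := by
  simpa [h₁.map_zero] using le_supConv (l₁ := l₁) (l₂ := l₂) (zero_add f).le

theorem supConv_le_of_le {d : S → ℝ≥0∞} (hd : IsFunctional d) (hd₁ : ∀ s, l₁ s ≤ d s)
    (hd₂ : ∀ s, l₂ s ≤ d s) (f : S) : supConv l₁ l₂ f ≤ d f :=
  supConv_le fun f₁ f₂ hf => calc
    l₁ f₁ + l₂ f₂ ≤ d f₁ + d f₂ := add_le_add (hd₁ f₁) (hd₂ f₂)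
    _ = d (f₁ + f₂) := (hd.map_add f₁ f₂).symm
    _ ≤ d f := hd.mono hf

theorem supConv_zero (hS : CuO5 S) (h₁ : IsFunctional l₁) (h₂ : IsFunctional l₂) :
    supConv l₁ l₂ (0 : S) = 0 := by
  have := hS.addLeftMono
  refine le_antisymm (supConv_le fun f₁ f₂ hf => ?_) bot_le
  have hf₁ : f₁ = 0 := le_antisymm ((le_add_of_nonneg_right (hS.zeroLe f₂)).trans hf) (hS.zeroLe f₁)
  have hf₂ : f₂ = 0 := le_antisymm ((le_add_of_nonneg_left (hS.zeroLe f₁)).trans hf) (hS.zeroLe f₂)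
  simp [hf₁, hf₂, h₁.map_zero, h₂.map_zero]

theorem supConv_set_nonempty (hS : CuO5 S) (f : S) :
    {x | ∃ f₁ f₂ : S, f₁ + f₂ ≤ f ∧ x = l₁ f₁ + l₂ f₂}.Nonempty :=
  ⟨_, 0, 0, (add_zero (0 : S)).trans_le (hS.zeroLe f), rfl⟩

theorem add_add_supConv_le (hS : CuO5 S) (h₁ : IsFunctional l₁) (h₂ : IsFunctional l₂)
    {f₁ f₂ g h : S} (hle : f₁ + f₂ + g ≤ h) :
    l₁ f₁ + l₂ f₂ + supConv l₁ l₂ g ≤ supConv l₁ l₂ h := by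
  have := hS.addLeftMono
  rw [supConv, ENNReal.add_sSup (supConv_set_nonempty hS g)]
  refine iSup₂_le ?_
  rintro _ ⟨g₁, g₂, hg, rfl⟩
  have hsum : f₁ + g₁ + (f₂ + g₂) ≤ h := calc
    f₁ + g₁ + (f₂ + g₂) = f₁ + f₂ + (g₁ + g₂) := by abel
    _ ≤ f₁ + f₂ + g := by gcongr
    _ ≤ h := hle
  calc l₁ f₁ + l₂ f₂ + (l₁ g₁ + l₂ g₂) = l₁ (f₁ + g₁) + l₂ (f₂ + g₂) := by
        rw [h₁.map_add, h₂.map_add]; ring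
    _ ≤ supConv l₁ l₂ h := le_supConv hsum

theorem add_supConv_le (hS : CuO5 S) (h₁ : IsFunctional l₁) (h₂ : IsFunctional l₂)
    {x g h : S} (hle : x + g ≤ h) : l₁ x + supConv l₁ l₂ g ≤ supConv l₁ l₂ h := by
  simpa [h₂.map_zero] using add_add_supConv_le hS h₁ h₂ (f₂ := 0) (by simpa using hle)

theorem supConv_add_supConv_le (hS : CuO5 S) (h₁ : IsFunctional l₁) (h₂ : IsFunctional l₂)
    (f g : S) : supConv l₁ l₂ f + supConv l₁ l₂ g ≤ supConv l₁ l₂ (f + g) := by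
  have := hS.addLeftMono
  rw [supConv, ENNReal.sSup_add (supConv_set_nonempty hS f)]
  refine iSup₂_le ?_
  rintro _ ⟨f₁, f₂, hf, rfl⟩
  exact add_add_supConv_le hS h₁ h₂ (by gcongr)

end SupConv

section Exhaustion

variable {S : Type*} [AddCommMonoid S] [PartialOrder S] {l l₁ l₂ : S → ℝ≥0∞}

/-- The chains `x ≪ x₂ ≪ x₃` and `y ≪ y₂ ≪ y₃` leave room for the applications of O5 in
`CuO5.exists_complements`. -/
theorem CuO6.exists_half_split (hS : CuO6 S) (rm : RealMul S) (hl : IsFunctional l)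
    {m F G k : S} (hm : m ≤ F + G + k) (hfin : l m ≠ ∞) {δ : ℝ≥0∞} (hδ : δ ≠ 0) :
    ∃ x x₂ x₃ y y₂ y₃ : S, CC x x₂ ∧ CC x₂ x₃ ∧ CC y y₂ ∧ CC y₂ y₃ ∧ x₃ ≤ F ∧ y₃ ≤ G ∧
      x₃ + y₃ ≤ m ∧ l x₃ ≤ l x + δ ∧ l y₃ ≤ l y + δ ∧ 2⁻¹ * l m ≤ l x + l y + l k + δ := by
  have := hS.addLeftMono
  set half := rm.smul 2⁻¹ m
  have hhalf : half ≤ m := rm.half_add_half m ▸ le_add_of_nonneg_right (hS.zeroLe half)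
  have hfin' : ∀ {s}, s ≤ half → l s ≠ ∞ :=
    fun hs => ne_top_of_le_ne_top hfin (hl.mono (hs.trans hhalf))
  obtain ⟨α, hα⟩ := hS.exists_isRapidSeq half
  obtain ⟨P, hP⟩ := (hl.eventually_le_add hα.monotone hα.2 (hfin' le_rfl) hδ).exists
  obtain ⟨β, γ, a, κ, hβ, hγ, haFG, haα, hκ, -, hQ⟩ :=
    hS.exists_rapid_split (hα.1 P) (hα.1 (P + 1)) ((hα.le (P + 2)).trans (hhalf.trans hm))
  obtain ⟨Q, hQ⟩ := hQ.exists
  obtain ⟨u, w, xh, yh, hu, hw, hxF, hxβ, hyG, hyβ, hR⟩ :=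
    hS.exists_rapid_split (hβ.1 Q) (hβ.1 (Q + 1)) ((hβ.le (Q + 2)).trans haFG)
  have hah : a ≤ half := haα.trans (hα.le _)
  have hxh : xh ≤ half := hxβ.trans ((hβ.le _).trans hah)
  have hyh : yh ≤ half := hyβ.trans ((hβ.le _).trans hah)
  obtain ⟨R, hRQ, hRx, hRy⟩ := (hR.and ((hl.eventually_le_add hu.monotone hu.2 (hfin' hxh) hδ).and
    (hl.eventually_le_add hw.monotone hw.2 (hfin' hyh) hδ))).exists
  refine ⟨u R, u (R + 1), u (R + 2), w R, w (R + 1), w (R + 2), hu.1 R, hu.1 (R + 1), hw.1 R,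
    hw.1 (R + 1), (hu.le _).trans hxF, (hw.le _).trans hyG,
    rm.half_add_half m ▸ add_le_add ((hu.le _).trans hxh) ((hw.le _).trans hyh),
    (hl.mono (hu.le _)).trans hRx, (hl.mono (hw.le _)).trans hRy, ?_⟩
  calc 2⁻¹ * l m = l half := (hl.map_smul_two_inv rm m).symm
    _ ≤ l (α P) + δ := hP
    _ ≤ l (u R + w R + k) + δ := by
      gcongr
      exact hl.mono (hQ.trans (add_le_add hRQ ((hγ.le Q).trans hκ)))
    _ = l (u R) + l (w R) + l k + δ := by rw [hl.map_add, hl.map_add]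

theorem CuO5.exists_complements (hS : CuO5 S) {x x₂ x₃ y y₂ y₃ m t F G k : S}
    (hx : CC x x₂) (hx₂ : CC x₂ x₃) (hy : CC y y₂) (hy₂ : CC y₂ y₃) (hxF : x₂ ≤ F)
    (hyG : y₂ ≤ G) (hm : x₃ + y₃ ≤ m) (hinv : m + t ≤ F + G + k) :
    ∃ E F' G' : S, x + F' ≤ F ∧ y + G' ≤ G ∧ x₂ + y₂ + E ≤ m ∧ m ≤ x₃ + y₃ + E ∧
      E + t + (x₂ + y₂) ≤ F' + G' + k + (x₂ + y₂) := by
  have := hS.addLeftMono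
  obtain ⟨F', hF'₁, hF'₂⟩ := hS.O5 hx hxF
  obtain ⟨G', hG'₁, hG'₂⟩ := hS.O5 hy hyG
  obtain ⟨E, hE₁, hE₂⟩ := hS.O5 (hS.O3 hx₂ hy₂) hm
  refine ⟨E, F', G', hF'₁, hG'₁, hE₁, hE₂, ?_⟩
  calc E + t + (x₂ + y₂) = x₂ + y₂ + E + t := by abel
    _ ≤ m + t := by gcongr
    _ ≤ F + G + k := hinv
    _ ≤ x₂ + F' + (y₂ + G') + k := by gcongr
    _ = F' + G' + k + (x₂ + y₂) := by abel

theorem CuO6.exists_exhaustion_step (hS : CuO6 S) (rm : RealMul S) (h₁ : IsFunctional l₁)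
    (h₂ : IsFunctional l₂) {m t F G k : S} (hinv : m + t ≤ F + G + k) (hm₁ : l₁ m ≠ ∞)
    (hm₂ : l₂ m ≠ ∞) {δ : ℝ≥0∞} (hδ : δ ≠ 0) :
    ∃ x y E F' G' c : S, E + t ≤ F' + G' + (k + c) ∧ E ≤ m ∧ x + F' ≤ F ∧ y + G' ≤ G ∧
      l₁ c ≤ δ ∧ l₂ c ≤ δ ∧ l₁ m ≤ l₁ x + l₁ y + l₁ E + 2 * δ ∧
      l₁ E ≤ 2⁻¹ * l₁ m + l₁ k + δ := by
  have := hS.addLeftMono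
  obtain ⟨x, x₂, x₃, y, y₂, y₃, hx, hx₂, hy, hy₂, hxF, hyG, hm, hlx, hly, hhalf⟩ :=
    hS.exists_half_split rm h₁ ((le_add_of_nonneg_right (hS.zeroLe t)).trans hinv) hm₁ hδ
  obtain ⟨E, F', G', hF', hG', hE₁, hE₂, hcancel⟩ :=
    hS.toCuO5.exists_complements hx hx₂ hy hy₂ (hx₂.le.trans hxF) (hy₂.le.trans hyG) hm hinv
  have hz : x₂ + y₂ ≤ m := (le_add_of_nonneg_right (hS.zeroLe E)).trans hE₁
  obtain ⟨c, hc, hc₁, hc₂⟩ := hS.toCuO5.exists_le_add_of_add_le_add rm h₁ h₂ hcancel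
    (ne_top_of_le_ne_top hm₁ (h₁.mono hz)) (ne_top_of_le_ne_top hm₂ (h₂.mono hz)) hδ
  refine ⟨x, y, E, F', G', c, by rwa [← add_assoc], (le_add_of_nonneg_left (hS.zeroLe _)).trans hE₁,
    hF', hG', hc₁, hc₂, ?_, ?_⟩
  · calc l₁ m ≤ l₁ (x₃ + y₃ + E) := h₁.mono hE₂
      _ = l₁ x₃ + l₁ y₃ + l₁ E := by rw [h₁.map_add, h₁.map_add]
      _ ≤ l₁ x + δ + (l₁ y + δ) + l₁ E := by gcongr
      _ = l₁ x + l₁ y + l₁ E + 2 * δ := by ring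
  · have hused : l₁ E + (l₁ x + l₁ y) ≤ l₁ m := calc
      l₁ E + (l₁ x + l₁ y) ≤ l₁ E + (l₁ x₂ + l₁ y₂) := by
        gcongr
        exacts [h₁.mono hx.le, h₁.mono hy.le]
      _ = l₁ (x₂ + y₂ + E) := by rw [h₁.map_add, h₁.map_add]; ring
      _ ≤ l₁ m := h₁.mono hE₁
    have hhalf_fin : 2⁻¹ * l₁ m ≠ ∞ := ENNReal.mul_ne_top (by norm_num) hm₁
    refine (ENNReal.add_le_add_iff_right hhalf_fin).1 ?_
    calc l₁ E + 2⁻¹ * l₁ m ≤ l₁ E + (l₁ x + l₁ y + l₁ k + δ) := by gcongr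
      _ = l₁ E + (l₁ x + l₁ y) + l₁ k + δ := by ring
      _ ≤ l₁ m + l₁ k + δ := by gcongr
      _ = 2⁻¹ * l₁ m + l₁ k + δ + 2⁻¹ * l₁ m := by
          nth_rewrite 1 [← one_mul (l₁ m)]
          rw [← ENNReal.inv_two_add_inv_two]
          ring

/-- Each round adds at most `2⁻¹ ^ j ≤ 1` to the coefficient of `l₁ k`, whence the factor `j`. -/
theorem CuO6.exhaustion (hS : CuO6 S) (rm : RealMul S) (h₁ : IsFunctional l₁)
    (h₂ : IsFunctional l₂) (t : S) (j : ℕ) :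
    ∀ m F G k : S, m + t ≤ F + G + k → l₁ m ≠ ∞ → l₂ m ≠ ∞ →
      l₁ m + l₂ t ≤ supConv l₁ l₂ F + supConv l₁ l₂ G + 2⁻¹ ^ j * l₁ m + j * l₁ k + l₂ k := by
  have := hS.addLeftMono
  induction j with
  | zero =>
    intro m F G k hinv _ _
    have ht : l₂ t ≤ supConv l₁ l₂ F + supConv l₁ l₂ G + l₂ k := calc
      l₂ t ≤ l₂ (F + G + k) := h₂.mono ((le_add_of_nonneg_left (hS.zeroLe m)).trans hinv)
      _ = l₂ F + l₂ G + l₂ k := by rw [h₂.map_add, h₂.map_add]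
      _ ≤ supConv l₁ l₂ F + supConv l₁ l₂ G + l₂ k := by
        gcongr <;> exact right_le_supConv h₁ _
    calc l₁ m + l₂ t ≤ l₁ m + (supConv l₁ l₂ F + supConv l₁ l₂ G + l₂ k) := by gcongr
      _ = _ := by simp only [pow_zero, one_mul, CharP.cast_eq_zero, zero_mul, add_zero]; ring
  | succ j ih =>
    intro m F G k hinv hm₁ hm₂
    have hε : Tendsto (fun n : ℕ => (j + 4) * (n : ℝ≥0∞)⁻¹) atTop (𝓝 0) := by
      simpa using
        ENNReal.Tendsto.const_mul ENNReal.tendsto_inv_nat_nhds_zero (Or.inr (by finiteness))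
    refine ENNReal.le_of_forall_le_add_of_tendsto_zero hε fun n => ?_
    set δ : ℝ≥0∞ := (n : ℝ≥0∞)⁻¹
    obtain ⟨x, y, E, F', G', c, hinv', hEm, hF', hG', hc₁, hc₂, htel, hdec⟩ :=
      hS.exists_exhaustion_step rm h₁ h₂ hinv hm₁ hm₂
        (ENNReal.inv_ne_zero.2 (ENNReal.natCast_ne_top n))
    have IH := ih E F' G' (k + c) hinv' (ne_top_of_le_ne_top hm₁ (h₁.mono hEm))
      (ne_top_of_le_ne_top hm₂ (h₂.mono hEm))
    set A : ℝ≥0∞ := 2⁻¹ ^ j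
    have hA : A ≤ 1 := pow_le_one₀ (by norm_num) (by norm_num)
    calc l₁ m + l₂ t ≤ l₁ x + l₁ y + l₁ E + 2 * δ + l₂ t := by gcongr
      _ = l₁ x + l₁ y + 2 * δ + (l₁ E + l₂ t) := by ring
      _ ≤ l₁ x + l₁ y + 2 * δ + (supConv l₁ l₂ F' + supConv l₁ l₂ G' + A * (2⁻¹ * l₁ m + l₁ k + δ)
            + j * (l₁ k + δ) + (l₂ k + δ)) := by
          grw [IH, ← hdec, h₁.map_add, h₂.map_add, hc₁, hc₂]
      _ = (l₁ x + supConv l₁ l₂ F') + (l₁ y + supConv l₁ l₂ G') + A * 2⁻¹ * l₁ m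
            + A * (l₁ k + δ) + j * l₁ k + l₂ k + (j + 3) * δ := by ring
      _ ≤ supConv l₁ l₂ F + supConv l₁ l₂ G + A * 2⁻¹ * l₁ m + 1 * (l₁ k + δ) + j * l₁ k + l₂ k
            + (j + 3) * δ := by
          grw [add_supConv_le hS.toCuO5 h₁ h₂ hF', add_supConv_le hS.toCuO5 h₁ h₂ hG']
          gcongr
      _ = _ := by simp only [A, pow_succ]; push_cast; ring

theorem CuO6.supConv_add_le (hS : CuO6 S) (rm : RealMul S) (h₁ : IsFunctional l₁)
    (h₂ : IsFunctional l₂) (f g : S) :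
    supConv l₁ l₂ (f + g) ≤ supConv l₁ l₂ f + supConv l₁ l₂ g := by
  have := hS.addLeftMono
  refine supConv_le fun e₁ e₂ he => ?_
  rcases eq_or_ne (supConv l₁ l₂ f + supConv l₁ l₂ g) ∞ with htop | hfin
  · simp [htop]
  have hle : ∀ {l : S → ℝ≥0∞}, IsFunctional l → (∀ s, l s ≤ supConv l₁ l₂ s) → l e₁ ≠ ∞ :=
    fun {l} hl hl' => ne_top_of_le_ne_top hfin <| calc
      _ ≤ l (f + g) := hl.mono ((le_add_of_nonneg_right (hS.zeroLe e₂)).trans he)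
      _ = l f + l g := hl.map_add f g
      _ ≤ _ := add_le_add (hl' f) (hl' g)
  refine ENNReal.le_of_forall_le_add_of_tendsto_zero (ε := fun j => 2⁻¹ ^ j * l₁ e₁)
    (by simpa using ENNReal.Tendsto.mul_const (ENNReal.tendsto_pow_atTop_nhds_zero_iff.2
      (by norm_num)) (Or.inr (hle h₁ (left_le_supConv h₂)))) fun j => ?_
  simpa [h₁.map_zero, h₂.map_zero] using hS.exhaustion rm h₁ h₂ e₂ j e₁ f g 0 (by rwa [add_zero])
    (hle h₁ (left_le_supConv h₂)) (hle h₂ (right_le_supConv h₁))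

theorem CuO6.supConv_add (hS : CuO6 S) (rm : RealMul S) (h₁ : IsFunctional l₁)
    (h₂ : IsFunctional l₂) (f g : S) :
    supConv l₁ l₂ (f + g) = supConv l₁ l₂ f + supConv l₁ l₂ g :=
  (hS.supConv_add_le rm h₁ h₂ f g).antisymm (supConv_add_supConv_le hS.toCuO5 h₁ h₂ f g)

end Exhaustion

section Regularize

variable {S : Type*} [AddCommMonoid S] [PartialOrder S] {μ : S → ℝ≥0∞}

noncomputable def regularize (μ : S → ℝ≥0∞) (f : S) : ℝ≥0∞ :=
  sSup (μ '' {f' | CC f' f})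

theorem le_regularize {f' f : S} (h : CC f' f) : μ f' ≤ regularize μ f :=
  le_sSup ⟨f', h, rfl⟩

theorem regularize_le {f : S} {c : ℝ≥0∞} (h : ∀ f', CC f' f → μ f' ≤ c) : regularize μ f ≤ c :=
  sSup_le <| Set.forall_mem_image.2 h

theorem regularize_mono : Monotone (regularize μ) :=
  fun _ _ h => regularize_le fun _ hf' => le_regularize (hf'.trans_le h)

theorem regularize_le_self (hμ : Monotone μ) (f : S) : regularize μ f ≤ μ f :=
  regularize_le fun _ hf' => hμ hf'.le

theorem le_regularize_of_le (hS : CuO5 S) {l : S → ℝ≥0∞} (hl : IsFunctional l)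
    (h : ∀ s, l s ≤ μ s) (f : S) : l f ≤ regularize μ f := by
  obtain ⟨c, hc⟩ := hS.exists_isRapidSeq f
  rw [hl.map_sup c hc.monotone f hc.2]
  exact iSup_le fun n => (h (c n)).trans (le_regularize (hc.cc n))

theorem regularize_zero (hS : CuO5 S) (hμ₀ : μ 0 = 0) : regularize μ 0 = 0 :=
  le_antisymm (regularize_le fun f' hf' => by rw [le_antisymm hf'.le (hS.zeroLe f'), hμ₀]) bot_le

theorem regularize_add (hS : CuO5 S) (hμ : Monotone μ)
    (hadd : ∀ f g : S, μ (f + g) = μ f + μ g) (f g : S) :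
    regularize μ (f + g) = regularize μ f + regularize μ g := by
  have := hS.addLeftMono
  have hne : ∀ f : S, (μ '' {f' | CC f' f}).Nonempty := fun f => ⟨_, 0, hS.zero_cc f, rfl⟩
  refine le_antisymm (regularize_le fun h hh => ?_) ?_
  · obtain ⟨p, hp⟩ := hS.exists_isRapidSeq f
    obtain ⟨q, hq⟩ := hS.exists_isRapidSeq g
    obtain ⟨n, hn⟩ := (hh.eventually_le (hp.monotone.add hq.monotone)
      (hS.O4 p q hp.monotone hq.monotone f g hp.2 hq.2) le_rfl).exists
    calc μ h ≤ μ (p n) + μ (q n) := (hμ hn).trans_eq (hadd _ _)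
      _ ≤ regularize μ f + regularize μ g :=
        add_le_add (le_regularize (hp.cc n)) (le_regularize (hq.cc n))
  · rw [regularize, ENNReal.sSup_add (hne f)]
    refine iSup₂_le ?_
    rintro _ ⟨f', hf', rfl⟩
    rw [regularize, ENNReal.add_sSup (hne g)]
    refine iSup₂_le ?_
    rintro _ ⟨g', hg', rfl⟩
    exact (hadd f' g').symm.trans_le (le_regularize (hS.O3 hf' hg'))

theorem regularize_map_sup (hS : CuO5 S) {u : ℕ → S} (hu : Monotone u) {x : S}
    (hx : IsLUB (Set.range u) x) : regularize μ x = ⨆ n, regularize μ (u n) := by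
  refine le_antisymm (regularize_le fun f' hf' => ?_)
    (iSup_le fun n => regularize_mono (hx.1 ⟨n, rfl⟩))
  obtain ⟨n, hn⟩ := hS.exists_cc_of_cc_of_isLUB hf' hu hx
  exact (le_regularize hn).trans (le_iSup (fun n => regularize μ (u n)) n)

theorem isFunctional_regularize (hS : CuO5 S) (hμ : Monotone μ)
    (hadd : ∀ f g : S, μ (f + g) = μ f + μ g) (hμ₀ : μ 0 = 0) : IsFunctional (regularize μ) where
  map_zero := regularize_zero hS hμ₀
  map_add := regularize_add hS hμ hadd
  mono := fun h => regularize_mono h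
  map_sup := fun _ hu _ hx => regularize_map_sup hS hu hx

end Regularize

/-- the Kantorovich-type formula for the supremum of two functionals. -/
theorem sup_kantorovich {S : Type*} [AddCommMonoid S] [PartialOrder S]
    (hS : CuO6 S) (rm : RealMul S) (l₁ l₂ : S → ℝ≥0∞)
    (h₁ : IsFunctional l₁) (h₂ : IsFunctional l₂) :
    ∀ lam : S → ℝ≥0∞,
      (lam = fun f => sSup {x | ∃ f₁ f₂ : S, f₁ + f₂ ≤ f ∧ x = l₁ f₁ + l₂ f₂}) →
      (∀ f g : S, lam (f + g) = lam f + lam g) ∧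
      IsFSup l₁ l₂ (fun f => sSup (lam '' {f' | CC f' f})) := by
  rintro lam rfl
  have hadd := hS.supConv_add rm h₁ h₂
  refine ⟨hadd, isFunctional_regularize hS.toCuO5 supConv_mono hadd (supConv_zero hS.toCuO5 h₁ h₂),
    le_regularize_of_le hS.toCuO5 h₁ (left_le_supConv h₂),
    le_regularize_of_le hS.toCuO5 h₂ (right_le_supConv h₁),
    fun d hd hd₁ hd₂ f => (regularize_le_self supConv_mono f).trans (supConv_le_of_le hd hd₁ hd₂ f)⟩
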